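/- arXiv:2605.25766 — 4 statements merged into one kernel-verified Lean document; each statement's English description precedes it below -/
import Mathlib

section
/- Let Λ be the tail copula of a d-dimensional copula, which is 1-homogeneous, componentwise nondecreasing and satisfies Λ(x) ≤ min_j x_j. Define λ* = sup over b ∈ (0,∞)^d with ∏ b_j = 1 of Λ(b). Then λ* = 1 if and only if Λ(x) = min(x_1,…,x_d) for all x ∈ (0,∞)^d. -/
open Filter Set

/-- A minimal axiomatization of a `d`-dimensional copula: a distribution function on
`[0,1]^d` with uniform margins, grounded, componentwise nondecreasing and
1-Lipschitz w.r.t. the ℓ¹-norm. -/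
def IsCopula (d : ℕ) (C : (Fin d → ℝ) → ℝ) : Prop :=
  (∀ u : Fin d → ℝ, (∀ j, u j ∈ Set.Icc (0:ℝ) 1) → 0 ≤ C u ∧ C u ≤ 1) ∧
  (∀ u : Fin d → ℝ, (∀ j, u j ∈ Set.Icc (0:ℝ) 1) → (∃ j, u j = 0) → C u = 0) ∧
  (∀ (j : Fin d) (x : ℝ), x ∈ Set.Icc (0:ℝ) 1 →
      C (fun i => if i = j then x else 1) = x) ∧
  (∀ u v : Fin d → ℝ, (∀ j, u j ∈ Set.Icc (0:ℝ) 1) → (∀ j, v j ∈ Set.Icc (0:ℝ) 1) →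
      (∀ j, u j ≤ v j) → C u ≤ C v) ∧
  (∀ u v : Fin d → ℝ, (∀ j, u j ∈ Set.Icc (0:ℝ) 1) → (∀ j, v j ∈ Set.Icc (0:ℝ) 1) →
      |C u - C v| ≤ ∑ j, |u j - v j|)

/-- `Λ` is the (lower) tail copula of `C`: `Λ x = lim_{t ↓ 0} C (t x) / t` on `(0,∞)^d`. -/
def HasTailCopula (d : ℕ) (C : (Fin d → ℝ) → ℝ) (Λ : (Fin d → ℝ) → ℝ) : Prop :=
  ∀ x : Fin d → ℝ, (∀ j, 0 < x j) →
    Tendsto (fun t : ℝ => C (fun j => t * x j) / t) (nhdsWithin 0 (Set.Ioi 0)) (nhds (Λ x))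

open Topology

/-
If `Λ` is homogeneous, nondecreasing and bounded by the minimum coordinate, then on the
surface `∏ b_j = 1` a large value `Λ b > r` forces every coordinate of `b` above `r`, hence
the largest one below `r^(1-d)`; monotonicity and homogeneity then give
`r < Λ b ≤ r^(1-d) Λ(1,…,1)`. Thus `λ* = 1` gives `r^d ≤ Λ(1,…,1)` for all `r < 1`,
i.e. `Λ(1,…,1) ≥ 1`. Conversely, `Λ(1,…,1) ≥ 1` and homogeneity give `Λ x ≥ Λ(m,…,m) ≥ m` for `m = min_j x_j`.
-/

lemma one_le_of_forall_pow_le {a : ℝ} {n : ℕ} (h : ∀ r, 0 < r → r < 1 → r ^ n ≤ a) :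
    1 ≤ a := by
  have hlim : Tendsto (fun r : ℝ => r ^ n) (𝓝[<] 1) (𝓝 1) := by
    simpa using ((continuous_pow n).tendsto (1 : ℝ)).mono_left nhdsWithin_le_nhds
  exact le_of_tendsto hlim
    (eventually_of_mem (Ioo_mem_nhdsLT one_pos) fun r hr => h r hr.1 hr.2)

section

variable {ι : Type*} [Fintype ι]

lemma pow_card_sub_one_mul_le_prod {f : ι → ℝ} {r : ℝ} (hr : 0 ≤ r) (hrf : ∀ i, r ≤ f i)
    (j : ι) : r ^ (Fintype.card ι - 1) * f j ≤ ∏ i, f i := by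
  classical
  calc r ^ (Fintype.card ι - 1) * f j = f j * ∏ _i ∈ Finset.univ.erase j, r := by
        rw [Finset.prod_const, Finset.card_erase_of_mem (Finset.mem_univ j),
          Finset.card_univ, mul_comm]
    _ ≤ f j * ∏ i ∈ Finset.univ.erase j, f i :=
        mul_le_mul_of_nonneg_left (Finset.prod_le_prod (fun _ _ => hr) fun i _ => hrf i)
          (hr.trans (hrf j))
    _ = ∏ i, f i := Finset.mul_prod_erase _ _ (Finset.mem_univ j)

variable [Nonempty ι]

lemma inf'_le_one_of_prod_eq_one {b : ι → ℝ} (hb : ∀ j, 0 < b j) (hprod : ∏ j, b j = 1) :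
    Finset.univ.inf' Finset.univ_nonempty b ≤ 1 := by
  set m := Finset.univ.inf' Finset.univ_nonempty b
  have hm : 0 < m := (Finset.lt_inf'_iff _).2 fun j _ => hb j
  have hpow : m ^ Fintype.card ι ≤ 1 :=
    calc m ^ Fintype.card ι = ∏ _j : ι, m := by rw [Finset.prod_const, Finset.card_univ]
      _ ≤ ∏ j, b j :=
          Finset.prod_le_prod (fun _ _ => hm.le) fun j _ => Finset.inf'_le b (Finset.mem_univ j)
      _ = 1 := hprod
  exact (pow_le_one_iff_of_nonneg hm.le Fintype.card_ne_zero).1 hpow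

variable {Λ : (ι → ℝ) → ℝ}

lemma apply_le_one_of_prod_eq_one (hbound : ∀ x : ι → ℝ, (∀ j, 0 < x j) → ∀ j, Λ x ≤ x j)
    {b : ι → ℝ} (hb : ∀ j, 0 < b j) (hprod : ∏ j, b j = 1) : Λ b ≤ 1 :=
  (Finset.le_inf' _ _ fun j _ => hbound b hb j).trans (inf'_le_one_of_prod_eq_one hb hprod)

lemma pow_card_le_apply_one
    (hhom : ∀ x : ι → ℝ, (∀ j, 0 < x j) → ∀ t : ℝ, 0 < t → Λ (fun j => t * x j) = t * Λ x)
    (hmono : ∀ x : ι → ℝ, (∀ j, 0 < x j) → ∀ y : ι → ℝ, (∀ j, 0 < y j) →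
      (∀ j, x j ≤ y j) → Λ x ≤ Λ y)
    (hbound : ∀ x : ι → ℝ, (∀ j, 0 < x j) → ∀ j, Λ x ≤ x j)
    {b : ι → ℝ} (hb : ∀ j, 0 < b j) (hprod : ∏ j, b j = 1) {r : ℝ} (hr : 0 < r)
    (hrb : r < Λ b) : r ^ Fintype.card ι ≤ Λ 1 := by
  set M := Finset.univ.sup' Finset.univ_nonempty b
  have hM : 0 < M := (Finset.lt_sup'_iff _).2 ⟨Classical.arbitrary ι, Finset.mem_univ _, hb _⟩
  have hrM : r ^ (Fintype.card ι - 1) * M ≤ 1 := by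
    obtain ⟨j, -, hj⟩ := Finset.exists_mem_eq_sup' Finset.univ_nonempty b
    rw [show M = b j from hj, ← hprod]
    exact pow_card_sub_one_mul_le_prod hr.le (fun i => (hrb.trans_le (hbound b hb i)).le) j
  have hΛb : Λ b ≤ M * Λ 1 :=
    calc Λ b ≤ Λ (fun j => M * (1 : ι → ℝ) j) :=
          hmono b hb _ (fun _ => by simpa using hM)
            fun j => by simpa using Finset.le_sup' b (Finset.mem_univ j)
      _ = M * Λ 1 := hhom 1 (fun _ => one_pos) M hM
  have hΛ1 : 0 ≤ Λ 1 := (pos_of_mul_pos_right (hr.trans (hrb.trans_le hΛb)) hM.le).le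
  calc r ^ Fintype.card ι = r ^ (Fintype.card ι - 1) * r :=
        (pow_sub_one_mul Fintype.card_ne_zero r).symm
    _ ≤ r ^ (Fintype.card ι - 1) * (M * Λ 1) := by gcongr; exact hrb.le.trans hΛb
    _ = (r ^ (Fintype.card ι - 1) * M) * Λ 1 := by ring
    _ ≤ Λ 1 := mul_le_of_le_one_left hΛ1 hrM

lemma apply_eq_inf'_of_one_le
    (hhom : ∀ x : ι → ℝ, (∀ j, 0 < x j) → ∀ t : ℝ, 0 < t → Λ (fun j => t * x j) = t * Λ x)
    (hmono : ∀ x : ι → ℝ, (∀ j, 0 < x j) → ∀ y : ι → ℝ, (∀ j, 0 < y j) →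
      (∀ j, x j ≤ y j) → Λ x ≤ Λ y)
    (hbound : ∀ x : ι → ℝ, (∀ j, 0 < x j) → ∀ j, Λ x ≤ x j)
    (h1 : 1 ≤ Λ 1) {x : ι → ℝ} (hx : ∀ j, 0 < x j) :
    Λ x = Finset.univ.inf' Finset.univ_nonempty x := by
  set m := Finset.univ.inf' Finset.univ_nonempty x
  have hm : 0 < m := (Finset.lt_inf'_iff _).2 fun j _ => hx j
  refine le_antisymm (Finset.le_inf' _ _ fun j _ => hbound x hx j) ?_
  calc m ≤ m * Λ 1 := le_mul_of_one_le_right hm.le h1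
    _ = Λ (fun j => m * (1 : ι → ℝ) j) := (hhom 1 (fun _ => one_pos) m hm).symm
    _ ≤ Λ x := hmono _ (fun _ => by simpa using hm) x hx
        fun j => by simpa using Finset.inf'_le x (Finset.mem_univ j)

end

/-- `λ* = 1` iff the tail copula equals the comonotone tail copula
`x ↦ min (x_1, …, x_d)` on `(0,∞)^d`. -/
theorem mtcm_eq_one_iff_comonotone (d : ℕ) (hd : 0 < d) (Λ : (Fin d → ℝ) → ℝ)
    (P : Set (Fin d → ℝ)) (hP : P = {x | ∀ j, 0 < x j})
    (B : Set (Fin d → ℝ)) (hB : B = {b | (∀ j, 0 < b j) ∧ ∏ j, b j = 1})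
    (hhom : ∀ x ∈ P, ∀ t : ℝ, 0 < t → Λ (fun j => t * x j) = t * Λ x)
    (hmono : ∀ x ∈ P, ∀ y ∈ P, (∀ j, x j ≤ y j) → Λ x ≤ Λ y)
    (hbound : ∀ x ∈ P, ∀ j, Λ x ≤ x j) :
    sSup (Λ '' B) = 1 ↔
      ∀ x ∈ P, Λ x =
        Finset.univ.inf' (by
          have : Nonempty (Fin d) := ⟨⟨0, hd⟩⟩
          exact Finset.univ_nonempty) x := by
  subst hP hB
  have : Nonempty (Fin d) := ⟨⟨0, hd⟩⟩
  have hle : ∀ y ∈ Λ '' {b | (∀ j, 0 < b j) ∧ ∏ j, b j = 1}, y ≤ 1 := by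
    rintro _ ⟨b, ⟨hb, hprod⟩, rfl⟩
    exact apply_le_one_of_prod_eq_one hbound hb hprod
  have hone : Λ 1 ∈ Λ '' {b | (∀ j, 0 < b j) ∧ ∏ j, b j = 1} :=
    ⟨1, ⟨fun _ => one_pos, by simp⟩, rfl⟩
  constructor
  · intro hsup
    have h1 : 1 ≤ Λ 1 := one_le_of_forall_pow_le fun r hr0 hr1 => by
      obtain ⟨_, ⟨b, ⟨hb, hprod⟩, rfl⟩, hrb⟩ := exists_lt_of_lt_csSup ⟨_, hone⟩ (hsup ▸ hr1)
      exact pow_card_le_apply_one hhom hmono hbound hb hprod hr0 hrb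
    exact fun x hx => apply_eq_inf'_of_one_le hhom hmono hbound h1 hx
  · intro hmin
    refine IsGreatest.csSup_eq ⟨?_, hle⟩
    simpa [hmin 1 fun _ => one_pos] using hone
end

section
/- Let C₁, C₂ be d-dimensional copulas admitting tail copulas Λ₁, Λ₂ and let t ∈ [0,1]. Then the convex combination tC₁ + (1−t)C₂ is a copula admitting the tail copula tΛ₁ + (1−t)Λ₂, and its maximal tail concordance measure satisfies λ*(tC₁ + (1−t)C₂) ≤ tλ*(C₁) + (1−t)λ*(C₂). -/
open Filter Set

/-!
The first two claims are linearity of the defining conditions and of limits. For the third,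
the `sSup` of a nonnegative combination is at most the combination of the `sSup`s once both
images are bounded above, and `Λ` is bounded on `B` because monotonicity and
uniform margins give `C u ≤ u j`, hence `Λ b ≤ b j`, and some `b j ≤ 1` when `∏ j, b j = 1`.
(For `d = 0` the function `s ↦ C (s x)` is constant, so a finite limit of `C (s x) / s` forces
`Λ = 0`.) Boundedness matters: `sSup` of a set not bounded above is `0`.
-/

open Topology

lemma IsCopula.convex_comb {d : ℕ} {C₁ C₂ : (Fin d → ℝ) → ℝ} (hC₁ : IsCopula d C₁)
    (hC₂ : IsCopula d C₂) {t : ℝ} (ht : t ∈ Icc (0 : ℝ) 1) :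
    IsCopula d (fun u => t * C₁ u + (1 - t) * C₂ u) := by
  obtain ⟨ht0, ht1⟩ := ht
  replace ht1 : 0 ≤ 1 - t := sub_nonneg.mpr ht1
  obtain ⟨hbd₁, hgr₁, hmar₁, hmono₁, hlip₁⟩ := hC₁
  obtain ⟨hbd₂, hgr₂, hmar₂, hmono₂, hlip₂⟩ := hC₂
  refine ⟨fun u hu => ?_, fun u hu hzero => ?_, fun j x hx => ?_,
    fun u v hu hv huv => ?_, fun u v hu hv => ?_⟩
  · obtain ⟨h₁, h₁'⟩ := hbd₁ u hu
    obtain ⟨h₂, h₂'⟩ := hbd₂ u hu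
    constructor <;> nlinarith
  · simp only [hgr₁ u hu hzero, hgr₂ u hu hzero]
    ring
  · simp only [hmar₁ j x hx, hmar₂ j x hx]
    ring
  · have h₁ := hmono₁ u v hu hv huv
    have h₂ := hmono₂ u v hu hv huv
    dsimp only
    nlinarith
  · calc |t * C₁ u + (1 - t) * C₂ u - (t * C₁ v + (1 - t) * C₂ v)|
        = |t * (C₁ u - C₁ v) + (1 - t) * (C₂ u - C₂ v)| := by ring_nf
      _ ≤ t * |C₁ u - C₁ v| + (1 - t) * |C₂ u - C₂ v| := by
        refine (abs_add_le _ _).trans_eq ?_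
        rw [abs_mul, abs_mul, abs_of_nonneg ht0, abs_of_nonneg ht1]
      _ ≤ t * ∑ j, |u j - v j| + (1 - t) * ∑ j, |u j - v j| := by
        gcongr
        exacts [hlip₁ u v hu hv, hlip₂ u v hu hv]
      _ = ∑ j, |u j - v j| := by ring

lemma IsCopula.apply_le {d : ℕ} {C : (Fin d → ℝ) → ℝ} (hC : IsCopula d C)
    {u : Fin d → ℝ} (hu : ∀ j, u j ∈ Icc (0 : ℝ) 1) (j : Fin d) : C u ≤ u j := by
  obtain ⟨-, -, hmar, hmono, -⟩ := hC
  have hv : ∀ i, (if i = j then u j else 1) ∈ Icc (0 : ℝ) 1 := fun i => by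
    split_ifs
    exacts [hu j, right_mem_Icc.mpr zero_le_one]
  calc C u ≤ C (fun i => if i = j then u j else 1) := by
        refine hmono u _ hu hv fun i => ?_
        split_ifs with h
        exacts [h ▸ le_rfl, (hu i).2]
    _ = u j := hmar j (u j) (hu j)

lemma HasTailCopula.linear_comb {d : ℕ} {C₁ C₂ Λ₁ Λ₂ : (Fin d → ℝ) → ℝ}
    (hΛ₁ : HasTailCopula d C₁ Λ₁) (hΛ₂ : HasTailCopula d C₂ Λ₂) (a b : ℝ) :
    HasTailCopula d (fun u => a * C₁ u + b * C₂ u) (fun x => a * Λ₁ x + b * Λ₂ x) := by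
  intro x hx
  simp only [add_div, mul_div_assoc]
  exact ((hΛ₁ x hx).const_mul a).add ((hΛ₂ x hx).const_mul b)

lemma HasTailCopula.le_apply {d : ℕ} {C Λ : (Fin d → ℝ) → ℝ} (hC : IsCopula d C)
    (hΛ : HasTailCopula d C Λ) {x : Fin d → ℝ} (hx : ∀ j, 0 < x j) (j : Fin d) :
    Λ x ≤ x j := by
  have hsmall : ∀ i, ∀ᶠ s in 𝓝[>] (0 : ℝ), s * x i ≤ 1 := fun i => by
    have h : Tendsto (fun s : ℝ => s * x i) (𝓝[>] 0) (𝓝 0) := by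
      simpa using ((continuous_mul_const (x i)).tendsto 0).mono_left nhdsWithin_le_nhds
    exact h.eventually (eventually_le_nhds zero_lt_one)
  refine le_of_tendsto (hΛ x hx) ?_
  filter_upwards [self_mem_nhdsWithin, eventually_all.mpr hsmall] with s (hs : 0 < s) hs1
  rw [div_le_iff₀ hs, mul_comm]
  exact hC.apply_le (fun i => ⟨mul_nonneg hs.le (hx i).le, hs1 i⟩) j

lemma HasTailCopula.eq_zero_of_dim_zero {C Λ : (Fin 0 → ℝ) → ℝ}
    (hΛ : HasTailCopula 0 C Λ) (x : Fin 0 → ℝ) : Λ x = 0 := by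
  have hconst : ∀ s : ℝ, (fun j => s * x j) = x := fun _ => Subsingleton.elim _ _
  have hlim : Tendsto (fun s : ℝ => C x / s) (𝓝[>] 0) (𝓝 (Λ x)) := by
    simpa only [hconst] using hΛ x finZeroElim
  have hCx : C x = 0 := by
    have h : Tendsto (fun s : ℝ => C x / s * s) (𝓝[>] 0) (𝓝 (Λ x * 0)) :=
      hlim.mul (tendsto_id.mono_left nhdsWithin_le_nhds)
    rw [mul_zero] at h
    refine tendsto_nhds_unique (tendsto_const_nhds.congr' ?_) h
    filter_upwards [self_mem_nhdsWithin] with s (hs : 0 < s)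
    rw [div_mul_cancel₀ _ hs.ne']
  rw [hCx] at hlim
  simpa using tendsto_nhds_unique hlim (by simp)

lemma HasTailCopula.le_one_of_prod_eq_one {d : ℕ} {C Λ : (Fin d → ℝ) → ℝ}
    (hC : IsCopula d C) (hΛ : HasTailCopula d C Λ) {b : Fin d → ℝ} (hb : ∀ j, 0 < b j)
    (hprod : ∏ j, b j = 1) : Λ b ≤ 1 := by
  rcases Nat.eq_zero_or_pos d with rfl | hd
  · exact (hΛ.eq_zero_of_dim_zero b).trans_le zero_le_one
  obtain ⟨j, hj⟩ : ∃ j, b j ≤ 1 := by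
    by_contra! h
    have : ∏ _j : Fin d, (1 : ℝ) < ∏ j, b j :=
      Finset.prod_lt_prod_of_nonempty (fun _ _ => one_pos) (fun i _ => h i)
        (Finset.univ_nonempty_iff.mpr ⟨⟨0, hd⟩⟩)
    simp [hprod] at this
  exact (hΛ.le_apply hC hb j).trans hj

lemma HasTailCopula.bddAbove_image {d : ℕ} {C Λ : (Fin d → ℝ) → ℝ} (hC : IsCopula d C)
    (hΛ : HasTailCopula d C Λ) : BddAbove (Λ '' {b | (∀ j, 0 < b j) ∧ ∏ j, b j = 1}) := by
  refine ⟨1, ?_⟩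
  rintro _ ⟨b, ⟨hb, hprod⟩, rfl⟩
  exact hΛ.le_one_of_prod_eq_one hC hb hprod

lemma csSup_image_linear_comb_le {α : Type*} {s : Set α} (hs : s.Nonempty) {f g : α → ℝ}
    (hf : BddAbove (f '' s)) (hg : BddAbove (g '' s)) {a b : ℝ} (ha : 0 ≤ a) (hb : 0 ≤ b) :
    sSup ((fun x => a * f x + b * g x) '' s) ≤ a * sSup (f '' s) + b * sSup (g '' s) := by
  refine csSup_le (hs.image _) ?_
  rintro _ ⟨x, hx, rfl⟩
  have hfx := le_csSup hf (mem_image_of_mem f hx)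
  have hgx := le_csSup hg (mem_image_of_mem g hx)
  dsimp only
  gcongr

/-- a convex combination of copulas is a copula, its tail copula is the
corresponding convex combination of tail copulas, and the MTCM is convex. -/
theorem mtcm_convexity (d : ℕ) (C₁ C₂ Λ₁ Λ₂ : (Fin d → ℝ) → ℝ)
    (hC₁ : IsCopula d C₁) (hC₂ : IsCopula d C₂)
    (hΛ₁ : HasTailCopula d C₁ Λ₁) (hΛ₂ : HasTailCopula d C₂ Λ₂)
    (t : ℝ) (ht : t ∈ Set.Icc (0:ℝ) 1)
    (B : Set (Fin d → ℝ)) (hB : B = {b | (∀ j, 0 < b j) ∧ ∏ j, b j = 1}) :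
    IsCopula d (fun u => t * C₁ u + (1 - t) * C₂ u) ∧
    HasTailCopula d (fun u => t * C₁ u + (1 - t) * C₂ u)
      (fun x => t * Λ₁ x + (1 - t) * Λ₂ x) ∧
    sSup ((fun x => t * Λ₁ x + (1 - t) * Λ₂ x) '' B) ≤
      t * sSup (Λ₁ '' B) + (1 - t) * sSup (Λ₂ '' B) := by
  subst hB
  have hBne : {b : Fin d → ℝ | (∀ j, 0 < b j) ∧ ∏ j, b j = 1}.Nonempty :=
    ⟨fun _ => 1, fun _ => one_pos, by simp⟩
  exact ⟨hC₁.convex_comb hC₂ ht, hΛ₁.linear_comb hΛ₂ t (1 - t),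
    csSup_image_linear_comb_le hBne (hΛ₁.bddAbove_image hC₁) (hΛ₂.bddAbove_image hC₂)
      ht.1 (sub_nonneg.mpr ht.2)⟩
end

section
/- Let ℓ : [0,∞)^d → [0,∞) be convex, 1-homogeneous, exchangeable (invariant under coordinate permutations) and satisfy ℓ(1,…,1) > 0. Then over the set B = {z ∈ (0,∞)^d : ∏_j z_j = 1}, ℓ attains its minimum uniquely at z = (1,…,1), i.e., ℓ(z) ≥ ℓ(1_d) for all z ∈ B with equality iff z = 1_d. -/
/-!
Averaging `z` over all cyclic shifts of its coordinates gives the constant vector `z̄ • 1`, so by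
convexity and exchangeability `ℓ (z̄ • 1) ≤ ℓ z`. By AM–GM, `∏ j, z j = 1` forces `z̄ ≥ 1`, with
equality only at `z = 1`, and homogeneity turns `ℓ (z̄ • 1)` into `z̄ * ℓ 1`.
-/

section AMGM

variable {ι : Type*} [Fintype ι] {z : ι → ℝ}

lemma sum_log_eq_zero_of_prod_eq_one (hz : ∀ i, 0 < z i) (hprod : ∏ i, z i = 1) :
    ∑ i, Real.log (z i) = 0 := by
  rw [← Real.log_prod fun i _ => (hz i).ne', hprod, Real.log_one]

lemma card_le_sum_of_prod_eq_one (hz : ∀ i, 0 < z i) (hprod : ∏ i, z i = 1) :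
    (Fintype.card ι : ℝ) ≤ ∑ i, z i := by
  have h : ∑ i, Real.log (z i) ≤ ∑ i, (z i - 1) :=
    Finset.sum_le_sum fun i _ => Real.log_le_sub_one_of_pos (hz i)
  rw [sum_log_eq_zero_of_prod_eq_one hz hprod, Finset.sum_sub_distrib] at h
  simpa using h

lemma card_lt_sum_of_prod_eq_one (hz : ∀ i, 0 < z i) (hprod : ∏ i, z i = 1) (hne : z ≠ 1) :
    (Fintype.card ι : ℝ) < ∑ i, z i := by
  obtain ⟨i₀, hi₀⟩ := Function.ne_iff.mp hne
  have h : ∑ i, Real.log (z i) < ∑ i, (z i - 1) :=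
    Finset.sum_lt_sum (fun i _ => Real.log_le_sub_one_of_pos (hz i))
      ⟨i₀, Finset.mem_univ _, Real.log_lt_sub_one_of_pos (hz i₀) hi₀⟩
  rw [sum_log_eq_zero_of_prod_eq_one hz hprod, Finset.sum_sub_distrib] at h
  simpa using h

end AMGM

lemma ConvexOn.map_const_mean_le {ι : Type*} [Fintype ι] [AddGroup ι] [Nonempty ι]
    {s : Set (ι → ℝ)} {f : (ι → ℝ) → ℝ} (hf : ConvexOn ℝ s f) {z : ι → ℝ}
    (hs : ∀ k, (fun j => z (j + k)) ∈ s) (hinv : ∀ k, f (fun j => z (j + k)) = f z) :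
    f (fun _ => (∑ i, z i) / Fintype.card ι) ≤ f z := by
  have hcard : (Fintype.card ι : ℝ) ≠ 0 := Nat.cast_ne_zero.mpr Fintype.card_ne_zero
  have hmean : ∑ k : ι, (Fintype.card ι : ℝ)⁻¹ • (fun j => z (j + k)) =
      fun _ => (∑ i, z i) / Fintype.card ι := by
    funext j
    simp only [Finset.sum_apply, Pi.smul_apply, smul_eq_mul, ← Finset.mul_sum]
    rw [Fintype.sum_equiv (Equiv.addLeft j) (fun i => z (j + i)) z fun _ => rfl, inv_mul_eq_div]
  have hjensen := hf.map_sum_le (t := Finset.univ) (w := fun _ => (Fintype.card ι : ℝ)⁻¹)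
    (p := fun k j => z (j + k)) (fun _ _ => by positivity)
    (by simp [Finset.card_univ, hcard]) fun k _ => hs k
  simpa [hmean, hinv, Finset.card_univ, hcard] using hjensen

/-- a convex, 1-homogeneous, exchangeable function `ℓ` on the nonnegative
orthant with `ℓ(1,…,1) > 0` attains its minimum over
`B = {z ∈ (0,∞)^d : ∏ j, z j = 1}` uniquely at `(1,…,1)`. -/
theorem exchangeable_stdf_min_at_one (d : ℕ) (ℓ : (Fin d → ℝ) → ℝ)
    (hconvex : ConvexOn ℝ {x : Fin d → ℝ | ∀ j, 0 ≤ x j} ℓ)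
    (hhom : ∀ x : Fin d → ℝ, (∀ j, 0 ≤ x j) → ∀ t : ℝ, 0 < t →
      ℓ (fun j => t * x j) = t * ℓ x)
    (hexch : ∀ (σ : Equiv.Perm (Fin d)) (x : Fin d → ℝ), (∀ j, 0 ≤ x j) →
      ℓ (fun j => x (σ j)) = ℓ x)
    (hpos : 0 < ℓ (fun _ => 1))
    (B : Set (Fin d → ℝ)) (hB : B = {z | (∀ j, 0 < z j) ∧ ∏ j, z j = 1}) :
    ∀ z ∈ B, ℓ (fun _ => 1) ≤ ℓ z ∧ (ℓ z = ℓ (fun _ => 1) ↔ z = fun _ => 1) := by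
  subst hB
  rintro z ⟨hz, hprod⟩
  rcases Nat.eq_zero_or_pos d with rfl | hd
  · obtain rfl : z = fun _ => 1 := Subsingleton.elim _ _
    simp
  have : NeZero d := ⟨hd.ne'⟩
  set m := (∑ j, z j) / d
  have hsym : ℓ (fun _ => m) ≤ ℓ z := by
    simpa [m] using hconvex.map_const_mean_le (fun k j => (hz _).le)
      fun k => hexch (Equiv.addRight k) z fun j => (hz j).le
  have hd' : (0 : ℝ) < d := by exact_mod_cast hd
  have hm : 1 ≤ m := by
    rw [le_div_iff₀ hd', one_mul]
    simpa using card_le_sum_of_prod_eq_one hz hprod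
  have hscale : ℓ (fun _ => m) = m * ℓ (fun _ => 1) := by
    simpa using hhom (fun _ => 1) (fun _ => zero_le_one) m (by linarith)
  refine ⟨by nlinarith, fun heq => ?_, fun h => by rw [h]⟩
  by_contra hne
  have hm' : 1 < m := by
    rw [lt_div_iff₀ hd', one_mul]
    simpa using card_lt_sum_of_prod_eq_one hz hprod hne
  nlinarith
end

section
/- Let K ≥ 2, α > 0, λ_1,…,λ_K > 0 and d_1,…,d_K ∈ ℕ_{>0} with D = ∑_k d_k. Then the supremum over p_1,…,p_K > 0 with ∏_k p_k = 1 of (∑_{k=1}^K λ_k^{−1/α} p_k^{−1/(α d_k)})^{−α} equals D^{−α} ∏_{k=1}^K (d_k^{α} λ_k)^{d_k/D}, and the maximizing (p_1,…,p_K) is unique and given by p_k = ((D^{α} λ*)/(d_k^{α} λ_k))^{d_k} where λ* denotes the optimal value D^{−α} ∏_k (d_k^{α} λ_k)^{d_k/D}. -/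
/-!
With weights `w k = d k / D` and `z k = λ k ^ (-1/α) * p k ^ (-1/(α d k)) / w k`, the sum in the
statement is the arithmetic mean `∑ w k * z k`. Because `w k / (α d k) = 1 / (α D)` does not depend
on `k`, the constraint `∏ p k = 1` makes the geometric mean `∏ z k ^ w k` independent of `p`, and
it equals `λ* ^ (-1/α)`. Weighted AM-GM therefore bounds the sum below by `λ* ^ (-1/α)`, with
equality exactly when all `z k` agree; solving `z k = λ* ^ (-1/α)` for `p k` gives `p*`.
-/

open Real Finset

section PowerSum

variable {ι : Type*} [Fintype ι] {w c e p : ι → ℝ} {s : ℝ}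

/-- When `w` is a probability vector with `w k * e k` independent of `k`, this is the minimum of
`∑ k, c k * p k ^ (-e k)` over positive `p` with `∏ k, p k = 1`. -/
noncomputable def powerSumMin (c w : ι → ℝ) : ℝ := ∏ k, (c k / w k) ^ w k

noncomputable def powerSumArgmin (c w e : ι → ℝ) (k : ι) : ℝ :=
  (c k / (w k * powerSumMin c w)) ^ (e k)⁻¹

theorem powerSumMin_pos (hw : ∀ k, 0 < w k) (hc : ∀ k, 0 < c k) : 0 < powerSumMin c w :=
  prod_pos fun k _ => rpow_pos_of_pos (div_pos (hc k) (hw k)) _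

theorem powerSumArgmin_pos (hw : ∀ k, 0 < w k) (hc : ∀ k, 0 < c k) (k : ι) :
    0 < powerSumArgmin c w e k :=
  rpow_pos_of_pos (div_pos (hc k) (mul_pos (hw k) (powerSumMin_pos hw hc))) _

theorem sum_mul_div_cancel (hw : ∀ k, 0 < w k) (f : ι → ℝ) :
    ∑ k, w k * (f k / w k) = ∑ k, f k :=
  sum_congr rfl fun k _ => mul_div_cancel₀ _ (hw k).ne'

theorem prod_rpow_eq_powerSumMin (hw : ∀ k, 0 < w k) (hc : ∀ k, 0 < c k)
    (hs : ∀ k, w k * e k = s) (hp : ∀ k, 0 < p k) (hprod : ∏ k, p k = 1) :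
    ∏ k, (c k * p k ^ (-e k) / w k) ^ w k = powerSumMin c w := by
  have hterm : ∀ k, (c k * p k ^ (-e k) / w k) ^ w k = (c k / w k) ^ w k * p k ^ (-s) := by
    intro k
    rw [mul_div_right_comm, mul_rpow (div_pos (hc k) (hw k)).le (rpow_nonneg (hp k).le _),
      ← rpow_mul (hp k).le, neg_mul, mul_comm (e k), hs]
  simp only [hterm, prod_mul_distrib, finsetProd_rpow _ _ (fun k _ => (hp k).le), hprod,
    one_rpow, mul_one, powerSumMin]

theorem powerSumMin_le_sum (hw : ∀ k, 0 < w k) (hw1 : ∑ k, w k = 1) (hc : ∀ k, 0 < c k)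
    (hs : ∀ k, w k * e k = s) (hp : ∀ k, 0 < p k) (hprod : ∏ k, p k = 1) :
    powerSumMin c w ≤ ∑ k, c k * p k ^ (-e k) := by
  have amgm := geom_mean_le_arith_mean_weighted univ w (fun k => c k * p k ^ (-e k) / w k)
    (fun k _ => (hw k).le) hw1
    (fun k _ => (div_pos (mul_pos (hc k) (rpow_pos_of_pos (hp k) _)) (hw k)).le)
  rwa [prod_rpow_eq_powerSumMin hw hc hs hp hprod, sum_mul_div_cancel hw] at amgm

theorem sum_eq_powerSumMin_iff (hw : ∀ k, 0 < w k) (hw1 : ∑ k, w k = 1) (hc : ∀ k, 0 < c k)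
    (hs : ∀ k, w k * e k = s) (hp : ∀ k, 0 < p k) (hprod : ∏ k, p k = 1) :
    ∑ k, c k * p k ^ (-e k) = powerSumMin c w ↔
      ∀ k, c k * p k ^ (-e k) = w k * powerSumMin c w := by
  have amgm := geom_mean_eq_arith_mean_weighted_iff_of_pos' univ w
    (fun k => c k * p k ^ (-e k) / w k) (fun k _ => hw k) hw1
    (fun k _ => (div_pos (mul_pos (hc k) (rpow_pos_of_pos (hp k) _)) (hw k)).le)
  simp only [prod_rpow_eq_powerSumMin hw hc hs hp hprod, sum_mul_div_cancel hw,
    mem_univ, true_imp_iff] at amgm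
  refine ⟨fun h k => ?_,
    fun h => by rw [sum_congr rfl fun k _ => h k, ← sum_mul, hw1, one_mul]⟩
  have hk := amgm.1 h.symm k
  rwa [h, div_eq_iff (hw k).ne', mul_comm (powerSumMin c w)] at hk

theorem mul_rpow_neg_eq_iff {a x y t : ℝ} (ha : 0 < a) (hx : 0 < x) (hy : 0 < y) (ht : t ≠ 0) :
    a * x ^ (-t) = y ↔ x = (a / y) ^ t⁻¹ := by
  rw [eq_rpow_inv hx.le (div_pos ha hy).le ht, rpow_neg hx.le, ← div_eq_mul_inv,
    div_eq_iff (rpow_pos_of_pos hx t).ne', eq_div_iff hy.ne', eq_comm, mul_comm]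

theorem sum_eq_powerSumMin_iff_eq_powerSumArgmin (hw : ∀ k, 0 < w k) (hw1 : ∑ k, w k = 1)
    (hc : ∀ k, 0 < c k) (hs : ∀ k, w k * e k = s) (he : ∀ k, e k ≠ 0) (hp : ∀ k, 0 < p k)
    (hprod : ∏ k, p k = 1) :
    ∑ k, c k * p k ^ (-e k) = powerSumMin c w ↔ p = powerSumArgmin c w e := by
  rw [sum_eq_powerSumMin_iff hw hw1 hc hs hp hprod, funext_iff]
  exact forall_congr' fun k => mul_rpow_neg_eq_iff (hc k) (hp k)
    (mul_pos (hw k) (powerSumMin_pos hw hc)) (he k)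

theorem prod_powerSumArgmin (hw : ∀ k, 0 < w k) (hw1 : ∑ k, w k = 1) (hc : ∀ k, 0 < c k)
    (hs : ∀ k, w k * e k = s) : ∏ k, powerSumArgmin c w e k = 1 := by
  have hm := powerSumMin_pos hw hc
  have hterm : ∀ k, powerSumArgmin c w e k =
      ((c k / w k) ^ w k / powerSumMin c w ^ w k) ^ s⁻¹ := by
    intro k
    have hinv : (e k)⁻¹ = w k * s⁻¹ := by
      rw [← hs k]; field_simp [(hw k).ne']
    have hck := div_pos (hc k) (hw k)
    rw [powerSumArgmin, hinv, div_mul_eq_div_div, rpow_mul (div_pos hck hm).le,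
      div_rpow hck.le hm.le]
  rw [prod_congr rfl fun k _ => hterm k, finsetProd_rpow, prod_div_distrib, ← rpow_sum_of_pos hm,
    hw1, rpow_one]
  · show (powerSumMin c w / powerSumMin c w) ^ s⁻¹ = 1
    rw [div_self hm.ne', one_rpow]
  · exact fun k _ => (div_pos (rpow_pos_of_pos (div_pos (hc k) (hw k)) _)
      (rpow_pos_of_pos hm _)).le

theorem sum_powerSumArgmin (hw : ∀ k, 0 < w k) (hw1 : ∑ k, w k = 1) (hc : ∀ k, 0 < c k)
    (hs : ∀ k, w k * e k = s) (he : ∀ k, e k ≠ 0) :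
    ∑ k, c k * powerSumArgmin c w e k ^ (-e k) = powerSumMin c w :=
  (sum_eq_powerSumMin_iff_eq_powerSumArgmin hw hw1 hc hs he (powerSumArgmin_pos hw hc)
    (prod_powerSumArgmin hw hw1 hc hs)).2 rfl

theorem rpow_powerSum_max_unique {t : ℝ} (ht : t < 0) (hw : ∀ k, 0 < w k) (hw1 : ∑ k, w k = 1)
    (hc : ∀ k, 0 < c k) (hs : ∀ k, w k * e k = s) (he : ∀ k, e k ≠ 0) :
    (∀ p ∈ {p : ι → ℝ | (∀ k, 0 < p k) ∧ ∏ k, p k = 1},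
        (∑ k, c k * p k ^ (-e k)) ^ t ≤ powerSumMin c w ^ t) ∧
      (powerSumArgmin c w e ∈ {p : ι → ℝ | (∀ k, 0 < p k) ∧ ∏ k, p k = 1} ∧
        (∑ k, c k * powerSumArgmin c w e k ^ (-e k)) ^ t = powerSumMin c w ^ t) ∧
      (∀ p ∈ {p : ι → ℝ | (∀ k, 0 < p k) ∧ ∏ k, p k = 1},
        (∑ k, c k * p k ^ (-e k)) ^ t = powerSumMin c w ^ t → p = powerSumArgmin c w e) := by
  have hm := powerSumMin_pos hw hc
  refine ⟨fun p ⟨hp, hprod⟩ => ?_,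
    ⟨⟨powerSumArgmin_pos hw hc, prod_powerSumArgmin hw hw1 hc hs⟩,
      by rw [sum_powerSumArgmin hw hw1 hc hs he]⟩,
    fun p ⟨hp, hprod⟩ heq => ?_⟩
  · exact rpow_le_rpow_of_nonpos hm (powerSumMin_le_sum hw hw1 hc hs hp hprod) ht.le
  · have hle := powerSumMin_le_sum hw hw1 hc hs hp hprod
    rw [rpow_left_inj (hm.le.trans hle) hm.le ht.ne,
      sum_eq_powerSumMin_iff_eq_powerSumArgmin hw hw1 hc hs he hp hprod] at heq
    exact heq

end PowerSum

section Nested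

variable {ι : Type*} [Fintype ι] {α D L : ℝ} {lam d : ι → ℝ}

theorem sum_div_eq_one (hD : ∑ k, d k = D) (hD0 : D ≠ 0) : ∑ k, d k / D = 1 := by
  rw [← sum_div, hD, div_self hD0]

theorem rpow_mul_prod_rpow_pos (hlam : ∀ k, 0 < lam k) (hd : ∀ k, 0 < d k) (hD : 0 < D) :
    0 < D ^ (-α) * ∏ k, (d k ^ α * lam k) ^ (d k / D) :=
  mul_pos (rpow_pos_of_pos hD _)
    (prod_pos fun k _ => rpow_pos_of_pos (mul_pos (rpow_pos_of_pos (hd k) _) (hlam k)) _)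

theorem powerSumMin_nested [Nonempty ι] (hα : α ≠ 0) (hlam : ∀ k, 0 < lam k)
    (hd : ∀ k, 0 < d k) (hD : ∑ k, d k = D)
    (hL : L = D ^ (-α) * ∏ k, (d k ^ α * lam k) ^ (d k / D)) :
    powerSumMin (fun k => lam k ^ (-(1 / α))) (fun k => d k / D) = L ^ (-(1 / α)) := by
  have hDpos : 0 < D := hD ▸ sum_pos (fun k _ => hd k) univ_nonempty
  have hw1 := sum_div_eq_one hD hDpos.ne'
  have hb : ∀ k, 0 < d k ^ α * lam k := fun k => mul_pos (rpow_pos_of_pos (hd k) α) (hlam k)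
  have hterm : ∀ k, lam k ^ (-(1 / α)) / (d k / D) = D * (d k ^ α * lam k) ^ (-(1 / α)) := by
    intro k
    rw [mul_rpow (rpow_pos_of_pos (hd k) α).le (hlam k).le, ← rpow_mul (hd k).le,
      show α * -(1 / α) = -1 by field_simp, rpow_neg_one]
    have := hd k
    field_simp
  calc powerSumMin (fun k => lam k ^ (-(1 / α))) (fun k => d k / D)
      = ∏ k, (D * (d k ^ α * lam k) ^ (-(1 / α))) ^ (d k / D) := by
        simp only [powerSumMin, hterm]
    _ = D * ∏ k, ((d k ^ α * lam k) ^ (-(1 / α))) ^ (d k / D) := by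
        simp only [mul_rpow hDpos.le (rpow_pos_of_pos (hb _) _).le, prod_mul_distrib,
          ← rpow_sum_of_pos hDpos, hw1, rpow_one]
    _ = (D ^ (-α)) ^ (-(1 / α)) * ∏ k, ((d k ^ α * lam k) ^ (d k / D)) ^ (-(1 / α)) := by
        rw [← rpow_mul hDpos.le, show -α * -(1 / α) = 1 by field_simp, rpow_one]
        refine congrArg (D * ·) (prod_congr rfl fun k _ => ?_)
        rw [← rpow_mul (hb k).le, ← rpow_mul (hb k).le, mul_comm (-(1 / α))]
    _ = L ^ (-(1 / α)) := by
        rw [hL, finsetProd_rpow _ _ (fun k _ => (rpow_pos_of_pos (hb k) _).le),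
          mul_rpow (rpow_pos_of_pos hDpos _).le (prod_pos fun k _ => rpow_pos_of_pos (hb k) _).le]

theorem powerSumArgmin_nested [Nonempty ι] (hα : α ≠ 0) (hlam : ∀ k, 0 < lam k)
    (hd : ∀ k, 0 < d k) (hD : ∑ k, d k = D)
    (hL : L = D ^ (-α) * ∏ k, (d k ^ α * lam k) ^ (d k / D)) :
    powerSumArgmin (fun k => lam k ^ (-(1 / α))) (fun k => d k / D) (fun k => 1 / (α * d k)) =
      fun k => (D ^ α * L / (d k ^ α * lam k)) ^ d k := by
  have hDpos : 0 < D := hD ▸ sum_pos (fun k _ => hd k) univ_nonempty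
  have hL0 : 0 < L := hL ▸ rpow_mul_prod_rpow_pos hlam hd hDpos
  funext k
  have hY : 0 < D ^ α * L / (d k ^ α * lam k) := by
    have := hlam k; have := hd k; positivity
  have hbase : lam k ^ (-(1 / α)) / (d k / D * L ^ (-(1 / α))) =
      (D ^ α * L / (d k ^ α * lam k)) ^ α⁻¹ := by
    rw [div_rpow (by positivity) (by have := hlam k; have := hd k; positivity),
      mul_rpow (by positivity) hL0.le, mul_rpow (by have := hd k; positivity) (hlam k).le,
      rpow_rpow_inv hDpos.le hα, rpow_rpow_inv (hd k).le hα, one_div, rpow_neg (hlam k).le,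
      rpow_neg hL0.le]
    have := rpow_pos_of_pos (hlam k) α⁻¹
    have := rpow_pos_of_pos hL0 α⁻¹
    have := hd k
    field_simp
  rw [powerSumArgmin, powerSumMin_nested hα hlam hd hD hL, hbase, ← rpow_mul hY.le]
  congr 1
  field_simp

theorem rpow_neg_powerSumMin_nested [Nonempty ι] (hα : 0 < α) (hlam : ∀ k, 0 < lam k)
    (hd : ∀ k, 0 < d k) (hD : ∑ k, d k = D)
    (hL : L = D ^ (-α) * ∏ k, (d k ^ α * lam k) ^ (d k / D)) :
    powerSumMin (fun k => lam k ^ (-(1 / α))) (fun k => d k / D) ^ (-α) = L := by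
  have hDpos : 0 < D := hD ▸ sum_pos (fun k _ => hd k) univ_nonempty
  have hL0 : 0 < L := hL ▸ rpow_mul_prod_rpow_pos hlam hd hDpos
  rw [powerSumMin_nested hα.ne' hlam hd hD hL, ← rpow_mul hL0.le,
    show -(1 / α) * -α = 1 by field_simp, rpow_one]

end Nested

/-- one-level recursion for the MTCM of nested Archimedean copulas:
the supremum of `(∑_k λ_k^{-1/α} p_k^{-1/(α d_k)})^{-α}` over `p ∈ (0,∞)^K` with
`∏_k p_k = 1` equals `λ* = D^{-α} ∏_k (d_k^α λ_k)^{d_k/D}` where `D = ∑_k d_k`, with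
unique maximizer `p_k = (D^α λ* / (d_k^α λ_k))^{d_k}`. -/
theorem nested_archimedean_recursion (K : ℕ) (hK : 2 ≤ K) (α : ℝ) (hα : 0 < α)
    (lam : Fin K → ℝ) (hlam : ∀ k, 0 < lam k)
    (dk : Fin K → ℕ) (hdk : ∀ k, 0 < dk k)
    (D : ℕ) (hD : D = ∑ k, dk k)
    (lamstar : ℝ)
    (hls : lamstar = (D : ℝ) ^ (-α) * ∏ k, ((dk k : ℝ) ^ α * lam k) ^ ((dk k : ℝ) / D))
    (S : (Fin K → ℝ) → ℝ)
    (hS : S = fun p => (∑ k, lam k ^ (-(1/α)) * p k ^ (-(1/(α * (dk k : ℝ))))) ^ (-α))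
    (pstar : Fin K → ℝ)
    (hpstar : pstar = fun k => (((D : ℝ) ^ α * lamstar) / ((dk k : ℝ) ^ α * lam k)) ^ (dk k : ℝ))
    (A : Set (Fin K → ℝ)) (hA : A = {p | (∀ k, 0 < p k) ∧ ∏ k, p k = 1}) :
    (∀ p ∈ A, S p ≤ lamstar) ∧
    (pstar ∈ A ∧ S pstar = lamstar) ∧
    (∀ p ∈ A, S p = lamstar → p = pstar) := by
  have : Nonempty (Fin K) := ⟨⟨0, by omega⟩⟩
  have hd : ∀ k, (0 : ℝ) < dk k := fun k => Nat.cast_pos.2 (hdk k)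
  have hDsum : ∑ k, (dk k : ℝ) = D := by rw [hD, Nat.cast_sum]
  have hDpos : (0 : ℝ) < D := hDsum ▸ sum_pos (fun k _ => hd k) univ_nonempty
  subst hS hpstar hA
  rw [← powerSumArgmin_nested hα.ne' hlam hd hDsum hls,
    ← rpow_neg_powerSumMin_nested hα hlam hd hDsum hls]
  refine rpow_powerSum_max_unique (s := 1 / (α * D)) (neg_lt_zero.2 hα)
    (fun k => div_pos (hd k) hDpos) (sum_div_eq_one hDsum hDpos.ne')
    (fun k => rpow_pos_of_pos (hlam k) _) (fun k => ?_) (fun k => ?_)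
  · field_simp [(hd k).ne']
  · have := hd k
    positivity
end
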